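/- Suppose |a|_p < α = β and |d|_p = α for f(x) = (ax²+bx)/(x²+dx+b) on ℂ_p. If |b+(a-d)d|_p < α², then the fixed point x₂ = a-d is attracting: for all x with 0 < |x-x₂|_p < α, |f(x)-x₂|_p < |x-x₂|_p, and every such x satisfies fⁿ(x) → x₂. -/

import Mathlib

/-!
Write `x₂ = a - d`, `α = ‖z₁‖` and `e = b + (a - d) d = d x₂ + b`. Then
`f(y) - x₂ = (y - x₂)(d y + b) / ((y - z₁)(y - z₂))`. The two distances `‖x₂ - zᵢ‖` are at most `α`
and multiply to `‖x₂² + e‖ = α²`, so both equal `α`; by the ultrametric inequality every `y` in the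
open ball of radius `α` about `x₂` is then also at distance exactly `α` from both roots. Since
`d y + b = d (y - x₂) + e`, on the closed ball of radius `r < α` this gives
`‖f(y) - x₂‖ ≤ max (α r) ‖e‖ / α² · ‖y - x₂‖`, a contraction factor `< 1`, so the iterates
converge geometrically to `x₂`.
-/

open Filter Topology IsUltrametricDist

section Ultrametric

variable {S : Type*} [SeminormedAddGroup S] [IsUltrametricDist S]

lemma norm_add_eq_left_of_norm_lt {x y : S} (h : ‖y‖ < ‖x‖) : ‖x + y‖ = ‖x‖ := by
  rw [norm_add_eq_max_of_norm_ne_norm h.ne', max_eq_left h.le]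

lemma norm_sub_le_max (x y : S) : ‖x - y‖ ≤ max ‖x‖ ‖y‖ := by
  simpa only [sub_eq_add_neg, norm_neg] using norm_add_le_max x (-y)

lemma norm_sub_eq_of_norm_sub_lt {x y z : S} (h : ‖x - y‖ < ‖y - z‖) : ‖x - z‖ = ‖y - z‖ := by
  rw [norm_sub_eq_max_of_norm_sub_ne_norm_sub x y z h.ne, max_eq_right h.le]

end Ultrametric

lemma eq_of_le_of_le_of_mul_eq_sq {u v α : ℝ} (hu0 : 0 ≤ u) (hv0 : 0 ≤ v)
    (hu : u ≤ α) (hv : v ≤ α) (huv : u * v = α ^ 2) : u = α ∧ v = α := by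
  constructor <;> nlinarith [mul_le_mul_of_nonneg_left hv hu0, mul_le_mul_of_nonneg_right hu hv0]

theorem tendsto_iterate_of_norm_sub_le_mul {E : Type*} [SeminormedAddCommGroup E]
    {g : E → E} {c x : E} {r q : ℝ} (hq0 : 0 ≤ q) (hq1 : q < 1)
    (hg : ∀ y, ‖y - c‖ ≤ r → ‖g y - c‖ ≤ q * ‖y - c‖) (hx : ‖x - c‖ ≤ r) :
    Tendsto (fun n => g^[n] x) atTop (𝓝 c) := by
  have hgeom : ∀ n : ℕ, ‖g^[n] x - c‖ ≤ q ^ n * ‖x - c‖ := by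
    intro n
    induction n with
    | zero => simp
    | succ n ih =>
      have hqn : q ^ n * ‖x - c‖ ≤ ‖x - c‖ :=
        mul_le_of_le_one_left (norm_nonneg _) (pow_le_one₀ hq0 hq1.le)
      rw [Function.iterate_succ_apply', pow_succ', mul_assoc]
      exact (hg _ (ih.trans (hqn.trans hx))).trans (mul_le_mul_of_nonneg_left ih hq0)
  have hlim : Tendsto (fun n : ℕ => q ^ n * ‖x - c‖) atTop (𝓝 0) := by
    simpa using (tendsto_pow_atTop_nhds_zero_of_lt_one hq0 hq1).mul_const ‖x - c‖
  exact tendsto_iff_norm_sub_tendsto_zero.mpr (squeeze_zero (fun _ => norm_nonneg _) hgeom hlim)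

section QuadRatMap

variable {K : Type*} [Field K]

def quadRatMap (a b d : K) (y : K) : K := (a * y ^ 2 + b * y) / (y ^ 2 + d * y + b)

lemma quadRatMap_sub_eq (a b d : K) {y : K} (hy : y ^ 2 + d * y + b ≠ 0) :
    quadRatMap a b d y - (a - d) = (y - (a - d)) * (d * y + b) / (y ^ 2 + d * y + b) := by
  rw [quadRatMap, eq_div_iff hy, sub_mul, div_mul_cancel₀ _ hy]
  ring

end QuadRatMap

section UltrametricDynamics

variable {K : Type*} [NormedField K] [IsUltrametricDist K] {a b d z₁ z₂ : K}

lemma norm_sub_roots_eq (hsum : z₁ + z₂ = -d) (hprod : z₁ * z₂ = b) (hz : ‖z₂‖ = ‖z₁‖)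
    {c : K} (hc : ‖c‖ = ‖z₁‖) (hdc : ‖d * c + b‖ < ‖z₁‖ ^ 2) :
    ‖c - z₁‖ = ‖z₁‖ ∧ ‖c - z₂‖ = ‖z₁‖ := by
  have hfactor : (c - z₁) * (c - z₂) = c ^ 2 + (d * c + b) := by
    linear_combination (-c) * hsum + hprod
  have hc2 : ‖c ^ 2‖ = ‖z₁‖ ^ 2 := by rw [norm_pow, hc]
  refine eq_of_le_of_le_of_mul_eq_sq (norm_nonneg _) (norm_nonneg _) ?_ ?_ ?_
  · simpa only [hc, max_self] using norm_sub_le_max c z₁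
  · simpa only [hc, hz, max_self] using norm_sub_le_max c z₂
  · rw [← norm_mul, hfactor, norm_add_eq_left_of_norm_lt (hc2 ▸ hdc), hc2]

lemma norm_quadRatMap_sub_le (hsum : z₁ + z₂ = -d) (hprod : z₁ * z₂ = b)
    (hz : ‖z₂‖ = ‖z₁‖) (hd : ‖d‖ = ‖z₁‖) (hx₂ : ‖a - d‖ = ‖z₁‖)
    (he : ‖b + (a - d) * d‖ < ‖z₁‖ ^ 2) {r : ℝ} (hr : r < ‖z₁‖) {y : K}
    (hy : ‖y - (a - d)‖ ≤ r) :
    ‖quadRatMap a b d y - (a - d)‖ ≤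
      max (‖z₁‖ * r) ‖b + (a - d) * d‖ / ‖z₁‖ ^ 2 * ‖y - (a - d)‖ := by
  have hα : 0 < ‖z₁‖ := (norm_nonneg _).trans_lt (hy.trans_lt hr)
  obtain ⟨h₁, h₂⟩ := norm_sub_roots_eq hsum hprod hz hx₂ (by rwa [mul_comm, add_comm])
  have hy₁ : ‖y - z₁‖ = ‖z₁‖ := (norm_sub_eq_of_norm_sub_lt (by linarith)).trans h₁
  have hy₂ : ‖y - z₂‖ = ‖z₁‖ := (norm_sub_eq_of_norm_sub_lt (by linarith)).trans h₂
  have hden : ‖y ^ 2 + d * y + b‖ = ‖z₁‖ ^ 2 := by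
    rw [show y ^ 2 + d * y + b = (y - z₁) * (y - z₂) by linear_combination y * hsum - hprod,
      norm_mul, hy₁, hy₂, sq]
  have hden₀ : y ^ 2 + d * y + b ≠ 0 := norm_pos_iff.mp (by rw [hden]; positivity)
  have hnum : ‖d * y + b‖ ≤ max (‖z₁‖ * r) ‖b + (a - d) * d‖ := by
    rw [show d * y + b = d * (y - (a - d)) + (b + (a - d) * d) by ring]
    refine (norm_add_le_max _ _).trans (max_le_max_right _ ?_)
    rw [norm_mul, hd]
    exact mul_le_mul_of_nonneg_left hy hα.le
  rw [quadRatMap_sub_eq a b d hden₀, norm_div, norm_mul, hden, mul_comm, mul_div_right_comm]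
  gcongr

end UltrametricDynamics

theorem stmt7_general {K : Type*} [NontriviallyNormedField K]
    [IsUltrametricDist K] (a b d z₁ z₂ : K)
    (hsum : z₁ + z₂ = -d) (hprod : z₁ * z₂ = b)
    (hβ : ‖z₂‖ = ‖z₁‖) (ha : ‖a‖ < ‖z₁‖) (hd : ‖d‖ = ‖z₁‖)
    (hmult : ‖b + (a - d)*d‖ < ‖z₁‖^2) :
    ∀ x : K, 0 < ‖x - (a - d)‖ → ‖x - (a - d)‖ < ‖z₁‖ →
      ‖(a*x^2 + b*x)/(x^2 + d*x + b) - (a - d)‖ < ‖x - (a - d)‖ ∧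
      Filter.Tendsto
        (fun n => (fun y : K => (a*y^2 + b*y)/(y^2 + d*y + b))^[n] x)
        Filter.atTop (nhds (a - d)) := by
  intro x hx₀ hxα
  have hα : 0 < ‖z₁‖ := (norm_nonneg a).trans_lt ha
  have hx₂ : ‖a - d‖ = ‖z₁‖ := by
    rw [sub_eq_neg_add, norm_add_eq_left_of_norm_lt (by rwa [norm_neg, hd]), norm_neg, hd]
  set q := max (‖z₁‖ * ‖x - (a - d)‖) ‖b + (a - d) * d‖ / ‖z₁‖ ^ 2
  have hq : q < 1 := by
    refine (div_lt_one (by positivity)).2 (max_lt ?_ hmult)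
    rw [sq]
    exact mul_lt_mul_of_pos_left hxα hα
  have hstep : ∀ y, ‖y - (a - d)‖ ≤ ‖x - (a - d)‖ →
      ‖quadRatMap a b d y - (a - d)‖ ≤ q * ‖y - (a - d)‖ :=
    fun y hy => norm_quadRatMap_sub_le hsum hprod hβ hd hx₂ hmult hxα hy
  exact ⟨(hstep x le_rfl).trans_lt (mul_lt_of_lt_one_left hx₀ hq),
    tendsto_iterate_of_norm_sub_le_mul (by positivity) hq hstep le_rfl⟩

/-- Case `|a| < α = β`, `|d| = α`, `|b+(a-d)d| < α²`: `x₂ = a - d` is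
attracting; every `x` with `0 < |x - x₂| < α` satisfies
`|f(x) - x₂| < |x - x₂|` and `fⁿ(x) → x₂`. -/
theorem stmt7 {K : Type*} [NontriviallyNormedField K] [IsAlgClosed K]
    [IsUltrametricDist K] (a b d z₁ z₂ : K) (hab : a*b ≠ 0) (had : a ≠ d)
    (hsum : z₁ + z₂ = -d) (hprod : z₁ * z₂ = b)
    (hβ : ‖z₂‖ = ‖z₁‖) (ha : ‖a‖ < ‖z₁‖) (hd : ‖d‖ = ‖z₁‖)
    (hmult : ‖b + (a - d)*d‖ < ‖z₁‖^2) :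
    ∀ x : K, 0 < ‖x - (a - d)‖ → ‖x - (a - d)‖ < ‖z₁‖ →
      ‖(a*x^2 + b*x)/(x^2 + d*x + b) - (a - d)‖ < ‖x - (a - d)‖ ∧
      Filter.Tendsto
        (fun n => (fun y : K => (a*y^2 + b*y)/(y^2 + d*y + b))^[n] x)
        Filter.atTop (nhds (a - d)) :=
  stmt7_general a b d z₁ z₂ hsum hprod hβ ha hd hmult
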